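/- Let W = Gamma^T X̃ for a (p+1) x d real matrix Gamma. Suppose (i) Y is conditionally independent of sigma(X̃) given sigma(W) (the informative-surrogate dimension-reduction condition), and (ii) Y is conditionally independent of R given sigma(X̃) (missing at random). Then E[Y | sigma(W) ⊔ sigma(R)] = E[Y | sigma(W)] almost surely; consequently the conditional mean function g with g(W) = E[Y | X̃] a.s. also satisfies g(W) = E[Y | W, R = 1], so the low-dimensional imputation model restricted to the fully observed data coincides with the unrestricted one. -/

import Mathlib

open MeasureTheory ProbabilityTheory Matrix

/-- `X̃ = (Z, X) ∈ ℝ^{p+1}`, the surrogate stacked on top of the covariates. -/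
noncomputable def tilde {Ω : Type*} {p : ℕ} (Z : Ω → ℝ) (X : Ω → Fin p → ℝ) (ω : Ω) :
    Fin (p + 1) → ℝ := Fin.cons (Z ω) (X ω)

lemma measurable_tilde {Ω : Type*} [MeasurableSpace Ω] {p : ℕ} {Z : Ω → ℝ} {X : Ω → Fin p → ℝ}
    (hZ : Measurable Z) (hX : Measurable X) : Measurable (tilde Z X) := by
  unfold tilde
  refine measurable_pi_iff.2 fun i => ?_
  refine Fin.cases ?_ (fun j => ?_) i
  · simpa using hZ
  · simpa [Function.comp_def] using (measurable_pi_apply j).comp hX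

/-- `Γᵀ x` for a `(p+1) × d` matrix `Γ` and `x ∈ ℝ^{p+1}`. -/
noncomputable def matT {n d : ℕ} (Γ : Matrix (Fin n) (Fin d) ℝ) (x : Fin n → ℝ) : Fin d → ℝ :=
  fun j => ∑ i, Γ i j * x i

lemma measurable_matT {Ω : Type*} [MeasurableSpace Ω] {n d : ℕ} {f : Ω → Fin n → ℝ}
    (hf : Measurable f) (Γ : Matrix (Fin n) (Fin d) ℝ) :
    Measurable fun ω => matT Γ (f ω) := by
  refine measurable_pi_iff.2 fun j => ?_
  exact Finset.measurable_sum _ fun i _ => measurable_const.mul ((measurable_pi_apply i).comp hf)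

/-!
A conditional independence `Y ⟂ g ∣ m'` upgrades to `E[Y ∣ m' ⊔ σ(g)] = E[Y ∣ m']`: both sides
have the same integral over every `A ∩ g⁻¹' t` with `A ∈ m'`, and these sets form a π-system
generating `m' ⊔ σ(g)`. By (i) this gives `E[Y ∣ X̃] = E[Y ∣ W]`, and by (ii)
`E[Y ∣ X̃, R] = E[Y ∣ X̃]`. Since `σ(W) ⊔ σ(R)` lies between `σ(W)` and `σ(X̃) ⊔ σ(R)`, the tower
property yields `E[Y ∣ W, R] = E[Y ∣ W]`. Finally `{R = 1} ∈ σ(R)`, so integrating over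
`s ∩ {R = 1}` with `s ∈ σ(W)` shows that `E[Y ∣ W]` is also the conditional expectation of `Y`
given `W` under `P(· ∣ R = 1)`.
-/

lemma MeasurableSpace.sup_eq_generateFrom_inter {Ω : Type*} (m₁ m₂ : MeasurableSpace Ω) :
    m₁ ⊔ m₂ = MeasurableSpace.generateFrom
      {S | ∃ A B, MeasurableSet[m₁] A ∧ MeasurableSet[m₂] B ∧ S = A ∩ B} := by
  refine le_antisymm (sup_le ?_ ?_) (MeasurableSpace.generateFrom_le ?_)
  · exact fun s hs => MeasurableSpace.measurableSet_generateFrom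
      ⟨s, Set.univ, hs, MeasurableSet.univ, (Set.inter_univ s).symm⟩
  · exact fun s hs => MeasurableSpace.measurableSet_generateFrom
      ⟨Set.univ, s, MeasurableSet.univ, hs, (Set.univ_inter s).symm⟩
  · rintro S ⟨A, B, hA, hB, rfl⟩
    exact (le_sup_left (a := m₁) _ hA).inter (le_sup_right (b := m₂) _ hB)

lemma isPiSystem_inter_measurableSet {Ω : Type*} (m₁ m₂ : MeasurableSpace Ω) :
    IsPiSystem {S : Set Ω | ∃ A B, MeasurableSet[m₁] A ∧ MeasurableSet[m₂] B ∧ S = A ∩ B} := by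
  rintro S ⟨A, B, hA, hB, rfl⟩ T ⟨A', B', hA', hB', rfl⟩ -
  exact ⟨A ∩ A', B ∩ B', hA.inter hA', hB.inter hB', Set.inter_inter_inter_comm A B A' B'⟩

lemma Set.indicator_eq_indicator_one_mul {α : Type*} (s : Set α) (f : α → ℝ) :
    s.indicator f = s.indicator (fun _ => (1 : ℝ)) * f := by
  ext x
  by_cases hx : x ∈ s <;> simp [hx]

section CondExpSup

variable {Ω : Type*} {m m₁ m₂ : MeasurableSpace Ω} [mΩ : MeasurableSpace Ω] {μ : Measure Ω}
  {f : Ω → ℝ}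

lemma setIntegral_sup_eq_of_forall_setIntegral_inter_eq (hm₁ : m₁ ≤ mΩ) (hm₂ : m₂ ≤ mΩ)
    {g : Ω → ℝ} (hf : Integrable f μ) (hg : Integrable g μ)
    (h : ∀ A B, MeasurableSet[m₁] A → MeasurableSet[m₂] B →
      ∫ x in A ∩ B, f x ∂μ = ∫ x in A ∩ B, g x ∂μ)
    {S : Set Ω} (hS : MeasurableSet[m₁ ⊔ m₂] S) :
    ∫ x in S, f x ∂μ = ∫ x in S, g x ∂μ := by
  have hle : m₁ ⊔ m₂ ≤ mΩ := sup_le hm₁ hm₂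
  induction S, hS using MeasurableSpace.induction_on_inter
    (MeasurableSpace.sup_eq_generateFrom_inter m₁ m₂) (isPiSystem_inter_measurableSet m₁ m₂) with
  | empty => simp
  | basic _ hT =>
    obtain ⟨A, B, hA, hB, rfl⟩ := hT
    exact h A B hA hB
  | compl t ht iht =>
    have hf' := integral_add_compl (hle _ ht) hf
    have hg' := integral_add_compl (hle _ ht) hg
    have huniv := h Set.univ Set.univ MeasurableSet.univ MeasurableSet.univ
    simp only [Set.inter_univ, Measure.restrict_univ] at huniv
    linarith
  | iUnion s hd hs ihs =>
    rw [integral_iUnion (fun i => hle _ (hs i)) hd hf.integrableOn,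
      integral_iUnion (fun i => hle _ (hs i)) hd hg.integrableOn]
    exact tsum_congr ihs

lemma condExp_sup_ae_eq_of_forall_setIntegral_inter [IsFiniteMeasure μ] (hm : m ≤ mΩ)
    (hm₂ : m₂ ≤ mΩ) (hf : Integrable f μ)
    (h : ∀ A B, MeasurableSet[m] A → MeasurableSet[m₂] B →
      ∫ x in A ∩ B, μ[f | m] x ∂μ = ∫ x in A ∩ B, f x ∂μ) :
    μ[f | m ⊔ m₂] =ᵐ[μ] μ[f | m] :=
  (ae_eq_condExp_of_forall_setIntegral_eq (sup_le hm hm₂) hf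
    (fun _ _ _ => integrable_condExp.integrableOn)
    (fun _ hS _ => setIntegral_sup_eq_of_forall_setIntegral_inter_eq hm hm₂
      integrable_condExp hf h hS)
    (stronglyMeasurable_condExp.mono (le_sup_left : m ≤ m ⊔ m₂)).aestronglyMeasurable).symm

lemma ae_norm_condExp_indicator_le_one (s : Set Ω) : ∀ᵐ x ∂μ, ‖(μ⟦s | m⟧) x‖ ≤ 1 :=
  ae_bdd_norm_condExp_of_ae_bdd_norm <| ae_of_all _ fun x =>
    (norm_indicator_le_norm_self _ x).trans norm_one.le

lemma setIntegral_inter_eq_setIntegral_condExp_indicator (hm : m ≤ mΩ)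
    [SigmaFinite (μ.trim hm)] (hf : Integrable f μ) {A C : Set Ω} (hA : MeasurableSet[m] A)
    (hC : MeasurableSet C) :
    ∫ x in A ∩ C, f x ∂μ = ∫ x in A, μ[C.indicator f | m] x ∂μ := by
  rw [setIntegral_condExp hm (hf.indicator hC) hA, setIntegral_indicator hC]

lemma setIntegral_inter_condExp [IsFiniteMeasure μ] (hm : m ≤ mΩ) {A C : Set Ω}
    (hA : MeasurableSet[m] A) (hC : MeasurableSet C) :
    ∫ x in A ∩ C, μ[f | m] x ∂μ = ∫ x in A, (μ⟦C | m⟧ * μ[f | m]) x ∂μ := by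
  rw [setIntegral_inter_eq_setIntegral_condExp_indicator hm integrable_condExp hA hC,
    Set.indicator_eq_indicator_one_mul]
  have hC1 : Integrable (C.indicator fun _ => (1 : ℝ)) μ := (integrable_const 1).indicator hC
  refine integral_congr_ae (ae_restrict_of_ae ?_)
  exact condExp_mul_of_stronglyMeasurable_right stronglyMeasurable_condExp
    (Set.indicator_eq_indicator_one_mul C _ ▸ integrable_condExp.indicator hC) hC1

end CondExpSup

namespace ProbabilityTheory

variable {Ω : Type*} {m' m₁ m₂ : MeasurableSpace Ω} [mΩ : MeasurableSpace Ω]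
  [StandardBorelSpace Ω] {μ : Measure Ω} [IsFiniteMeasure μ] {hm' : m' ≤ mΩ} {f : Ω → ℝ}

lemma CondIndep.condExp_indicator_sup_ae_eq (hind : CondIndep m' m₁ m₂ hm' μ) (hm₁ : m₁ ≤ mΩ)
    (hm₂ : m₂ ≤ mΩ) {B : Set Ω} (hB : MeasurableSet[m₂] B) :
    μ⟦B | m' ⊔ m₁⟧ =ᵐ[μ] μ⟦B | m'⟧ := by
  refine condExp_sup_ae_eq_of_forall_setIntegral_inter hm' hm₁
    ((integrable_const 1).indicator (hm₂ _ hB)) fun A C hA hC => ?_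
  rw [setIntegral_inter_condExp hm' hA (hm₁ _ hC),
    setIntegral_inter_eq_setIntegral_condExp_indicator hm' _ hA (hm₁ _ hC),
    Set.indicator_indicator]
  · exact integral_congr_ae <| ae_restrict_of_ae <|
      ((condIndep_iff m' m₁ m₂ hm' hm₁ hm₂ μ).1 hind C B hC hB).symm
  · exact (integrable_const 1).indicator (hm₂ _ hB)

/-- The product rule of conditional independence, extended from indicators of `m₁`-sets to
integrable `m₁`-measurable functions. -/
lemma CondIndep.condExp_indicator_ae_eq_mul (hind : CondIndep m' m₁ m₂ hm' μ) (hm₁ : m₁ ≤ mΩ)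
    (hm₂ : m₂ ≤ mΩ) (hf : StronglyMeasurable[m₁] f) (hfi : Integrable f μ) {B : Set Ω}
    (hB : MeasurableSet[m₂] B) :
    μ[B.indicator f | m'] =ᵐ[μ] μ⟦B | m'⟧ * μ[f | m'] := by
  have hsup : m' ⊔ m₁ ≤ mΩ := sup_le hm' hm₁
  have hB1 : Integrable (B.indicator fun _ => (1 : ℝ)) μ :=
    (integrable_const 1).indicator (hm₂ _ hB)
  have hpull : μ[B.indicator f | m' ⊔ m₁] =ᵐ[μ] μ⟦B | m'⟧ * f := by
    rw [Set.indicator_eq_indicator_one_mul]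
    filter_upwards [condExp_mul_of_stronglyMeasurable_right (hf.mono (le_sup_right : m₁ ≤ m' ⊔ m₁))
        (Set.indicator_eq_indicator_one_mul B f ▸ hfi.indicator (hm₂ _ hB)) hB1,
      hind.condExp_indicator_sup_ae_eq hm₁ hm₂ hB] with x hx hB'
    rw [hx, Pi.mul_apply, hB', Pi.mul_apply]
  calc μ[B.indicator f | m'] =ᵐ[μ] μ[μ[B.indicator f | m' ⊔ m₁] | m'] :=
        (condExp_condExp_of_le le_sup_left hsup).symm
    _ =ᵐ[μ] μ[μ⟦B | m'⟧ * f | m'] := condExp_congr_ae hpull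
    _ =ᵐ[μ] μ⟦B | m'⟧ * μ[f | m'] :=
        condExp_stronglyMeasurable_mul_of_bound hm' stronglyMeasurable_condExp hfi 1
          (ae_norm_condExp_indicator_le_one B)

lemma CondIndep.condExp_sup_ae_eq (hind : CondIndep m' m₁ m₂ hm' μ) (hm₁ : m₁ ≤ mΩ)
    (hm₂ : m₂ ≤ mΩ) (hf : StronglyMeasurable[m₁] f) (hfi : Integrable f μ) :
    μ[f | m' ⊔ m₂] =ᵐ[μ] μ[f | m'] := by
  refine condExp_sup_ae_eq_of_forall_setIntegral_inter hm' hm₂ hfi fun A B hA hB => ?_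
  rw [setIntegral_inter_condExp hm' hA (hm₂ _ hB),
    setIntegral_inter_eq_setIntegral_condExp_indicator hm' hfi hA (hm₂ _ hB)]
  exact integral_congr_ae <| ae_restrict_of_ae <|
    (hind.condExp_indicator_ae_eq_mul hm₁ hm₂ hf hfi hB).symm

lemma CondIndepFun.condExp_sup_comap_ae_eq {β : Type*} [mβ : MeasurableSpace β] {Y : Ω → ℝ}
    {g : Ω → β} (hind : CondIndepFun m' hm' Y g μ) (hY : Measurable Y) (hg : Measurable g)
    (hYi : Integrable Y μ) :
    μ[Y | m' ⊔ MeasurableSpace.comap g mβ] =ᵐ[μ] μ[Y | m'] :=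
  ((condIndepFun_iff_condIndep m' hm' Y g μ).1 hind).condExp_sup_ae_eq hY.comap_le hg.comap_le
    (comap_measurable Y).stronglyMeasurable hYi

end ProbabilityTheory

section Cond

variable {Ω : Type*} {m m₁ m₂ m₃ : MeasurableSpace Ω} [mΩ : MeasurableSpace Ω] {μ : Measure Ω}
  {f : Ω → ℝ}

lemma condExp_ae_eq_of_le_of_condExp_ae_eq [IsFiniteMeasure μ] (h₁₂ : m₁ ≤ m₂) (h₂₃ : m₂ ≤ m₃)
    (h₃ : m₃ ≤ mΩ) (h : μ[f | m₃] =ᵐ[μ] μ[f | m₁]) :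
    μ[f | m₂] =ᵐ[μ] μ[f | m₁] :=
  calc μ[f | m₂] =ᵐ[μ] μ[μ[f | m₃] | m₂] := (condExp_condExp_of_le h₂₃ h₃).symm
    _ =ᵐ[μ] μ[μ[f | m₁] | m₂] := condExp_congr_ae h
    _ = μ[f | m₁] := condExp_of_stronglyMeasurable (h₂₃.trans h₃)
        (stronglyMeasurable_condExp.mono h₁₂) integrable_condExp

lemma MeasureTheory.Integrable.cond (hf : Integrable f μ) (s : Set Ω) : Integrable f μ[|s] := by
  by_cases hs : μ s = 0
  · rw [cond_eq_zero_of_meas_eq_zero hs]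
    exact integrable_zero_measure
  · exact hf.restrict.smul_measure (ENNReal.inv_ne_top.2 hs)

lemma setIntegral_cond {s t : Set Ω} (hs : MeasurableSet s) (g : Ω → ℝ) :
    ∫ x in s, g x ∂μ[|t] = (μ t)⁻¹.toReal • ∫ x in s ∩ t, g x ∂μ := by
  rw [ProbabilityTheory.cond, Measure.restrict_smul, integral_smul_measure,
    Measure.restrict_restrict hs]

lemma condExp_ae_eq_condExp_cond [IsFiniteMeasure μ] (hm : m ≤ mΩ) (hm₂ : m₂ ≤ mΩ)
    (hf : Integrable f μ) (hsup : μ[f | m ⊔ m₂] =ᵐ[μ] μ[f | m]) {E : Set Ω} (hE : MeasurableSet[m₂] E) :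
    μ[f | m] =ᵐ[μ[|E]] μ[|E][f | m] := by
  refine ae_eq_condExp_of_forall_setIntegral_eq hm (hf.cond E)
    (fun _ _ _ => (integrable_condExp.cond E).integrableOn) (fun s hs _ => ?_)
    stronglyMeasurable_condExp.aestronglyMeasurable
  have hsE : MeasurableSet[m ⊔ m₂] (s ∩ E) := (le_sup_left (b := m₂) _ hs).inter
    (le_sup_right (a := m) _ hE)
  rw [setIntegral_cond (hm _ hs), setIntegral_cond (hm _ hs),
    ← setIntegral_condExp (sup_le hm hm₂) hf hsE]
  exact congrArg _ (integral_congr_ae (ae_restrict_of_ae hsup.symm))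

end Cond

theorem condexp_dimension_reduction_missing_general
    {Ω : Type*} [MeasurableSpace Ω] [StandardBorelSpace Ω] {P : Measure Ω}
    [IsProbabilityMeasure P] {p d : ℕ}
    (X : Ω → Fin p → ℝ) (Z Y R : Ω → ℝ)
    (hX : Measurable X) (hZ : Measurable Z) (hY : Measurable Y) (hR : Measurable R)
    (hYint : Integrable Y P)
    (Γ : Matrix (Fin (p + 1)) (Fin d) ℝ)
    -- (i) `Y ⟂ σ(X̃) ∣ σ(W)` where `W = Γᵀ X̃`
    (hDR : CondIndepFun (MeasurableSpace.comap (fun ω => matT Γ (tilde Z X ω)) inferInstance)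
      (measurable_matT (measurable_tilde hZ hX) Γ).comap_le Y (tilde Z X) P)
    -- (ii) `Y ⟂ R ∣ σ(X̃)` (missing at random)
    (hMAR : CondIndepFun (MeasurableSpace.comap (tilde Z X) inferInstance)
      (measurable_tilde hZ hX).comap_le Y R P) :
    P[Y | MeasurableSpace.comap (fun ω => matT Γ (tilde Z X ω)) inferInstance
          ⊔ MeasurableSpace.comap R inferInstance]
        =ᵐ[P] P[Y | MeasurableSpace.comap (fun ω => matT Γ (tilde Z X ω)) inferInstance] ∧
      ∀ g : (Fin d → ℝ) → ℝ, Measurable g →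
        ((fun ω => g (matT Γ (tilde Z X ω)))
            =ᵐ[P] P[Y | MeasurableSpace.comap (tilde Z X) inferInstance]) →
        (fun ω => g (matT Γ (tilde Z X ω)))
            =ᵐ[P[|{ω | R ω = 1}]]
              (P[|{ω | R ω = 1}])[Y |
                MeasurableSpace.comap (fun ω => matT Γ (tilde Z X ω)) inferInstance] := by
  have htilde : Measurable (tilde Z X) := measurable_tilde hZ hX
  have hWX : MeasurableSpace.comap (fun ω => matT Γ (tilde Z X ω)) inferInstance
      ≤ MeasurableSpace.comap (tilde Z X) inferInstance :=
    ((measurable_matT measurable_id Γ).comp (comap_measurable (tilde Z X))).comap_le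
  have hXW : P[Y | MeasurableSpace.comap (tilde Z X) inferInstance]
      =ᵐ[P] P[Y | MeasurableSpace.comap (fun ω => matT Γ (tilde Z X ω)) inferInstance] := by
    simpa only [sup_eq_right.2 hWX] using hDR.condExp_sup_comap_ae_eq hY htilde hYint
  have hWR := condExp_ae_eq_of_le_of_condExp_ae_eq le_sup_left (sup_le_sup_right hWX _)
    (sup_le htilde.comap_le hR.comap_le) ((hMAR.condExp_sup_comap_ae_eq hY hR hYint).trans hXW)
  refine ⟨hWR, fun g _ hg => ?_⟩
  exact (cond_absolutelyContinuous.ae_eq (hg.trans hXW)).trans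
    (condExp_ae_eq_condExp_cond (measurable_matT htilde Γ).comap_le hR.comap_le hYint hWR
      ⟨{1}, measurableSet_singleton 1, rfl⟩)

/-- Let `W = Γᵀ X̃`.  If (i) `Y ⟂ σ(X̃) ∣ σ(W)` (informative-surrogate dimension
reduction) and (ii) `Y ⟂ R ∣ σ(X̃)` (missing at random), then
`E[Y ∣ σ(W) ⊔ σ(R)] = E[Y ∣ σ(W)]` a.s.; consequently any measurable `g` with
`g(W) = E[Y ∣ X̃]` a.s. also satisfies `g(W) = E[Y ∣ W, R = 1]`, i.e. the low-dimensional
imputation model restricted to the fully observed data coincides with the unrestricted one. -/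
theorem condexp_dimension_reduction_missing
    {Ω : Type*} [MeasurableSpace Ω] [StandardBorelSpace Ω] {P : Measure Ω}
    [IsProbabilityMeasure P] {p d : ℕ}
    (X : Ω → Fin p → ℝ) (Z Y R : Ω → ℝ)
    (hX : Measurable X) (hZ : Measurable Z) (hY : Measurable Y) (hR : Measurable R)
    (hXbd : ∃ C, ∀ ω i, |X ω i| ≤ C) (hZbd : ∃ C, ∀ ω, |Z ω| ≤ C)
    (hYint : Integrable Y P)
    (hR01 : ∀ ω, R ω = 0 ∨ R ω = 1)
    (Γ : Matrix (Fin (p + 1)) (Fin d) ℝ)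
    -- (i) `Y ⟂ σ(X̃) ∣ σ(W)` where `W = Γᵀ X̃`
    (hDR : CondIndepFun (MeasurableSpace.comap (fun ω => matT Γ (tilde Z X ω)) inferInstance)
      (measurable_matT (measurable_tilde hZ hX) Γ).comap_le Y (tilde Z X) P)
    -- (ii) `Y ⟂ R ∣ σ(X̃)` (missing at random)
    (hMAR : CondIndepFun (MeasurableSpace.comap (tilde Z X) inferInstance)
      (measurable_tilde hZ hX).comap_le Y R P) :
    P[Y | MeasurableSpace.comap (fun ω => matT Γ (tilde Z X ω)) inferInstance
          ⊔ MeasurableSpace.comap R inferInstance]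
        =ᵐ[P] P[Y | MeasurableSpace.comap (fun ω => matT Γ (tilde Z X ω)) inferInstance] ∧
      ∀ g : (Fin d → ℝ) → ℝ, Measurable g →
        ((fun ω => g (matT Γ (tilde Z X ω)))
            =ᵐ[P] P[Y | MeasurableSpace.comap (tilde Z X) inferInstance]) →
        (fun ω => g (matT Γ (tilde Z X ω)))
            =ᵐ[P[|{ω | R ω = 1}]]
              (P[|{ω | R ω = 1}])[Y |
                MeasurableSpace.comap (fun ω => matT Γ (tilde Z X ω)) inferInstance] :=
  condexp_dimension_reduction_missing_general X Z Y R hX hZ hY hR hYint Γ hDR hMAR
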